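/- arXiv:2209.13689 — 6 statements merged into one kernel-verified Lean document; each statement's English description precedes it below -/
import Mathlib

section
/- For λ > 0 and μ_p ∈ (0,1), the expression (e^{1/λ}/(e^{2/λ}−1))·(e^{1/λ} − 2√(μ_p(1−μ_p))) − μ_p equals (e^{1/λ}·√(1−μ_p) − √μ_p)² / (e^{2/λ}−1); consequently it is zero if and only if √μ_p/√(1−μ_p) = e^{1/λ}, and is nonnegative for all μ_p ∈ (0,1). -/
/-! With `a = √p`, `b = √(1 - p)` and `a² + b² = 1`, the numerator `E (E - 2ab) - a² (E² - 1)`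
is `E² b² - 2Eab + a² = (Eb - a)²`. For `E = e^{1/λ} > 1` the denominator `E² - 1` is positive,
so the expression is a nonnegative square quotient vanishing exactly when `a = E b`. -/

open Real

lemma div_mul_sub_two_sqrt_sub_eq_sq_div {E p : ℝ} (hE : E ^ 2 ≠ 1) (hp₀ : 0 ≤ p) (hp₁ : p ≤ 1) :
    E / (E ^ 2 - 1) * (E - 2 * √(p * (1 - p))) - p = (E * √(1 - p) - √p) ^ 2 / (E ^ 2 - 1) := by
  have hden : E ^ 2 - 1 ≠ 0 := sub_ne_zero.mpr hE
  have ha : √p ^ 2 = p := sq_sqrt hp₀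
  have hb : √(1 - p) ^ 2 = 1 - p := sq_sqrt (by linarith)
  rw [sqrt_mul hp₀, eq_div_iff hden, sub_mul, div_mul_eq_mul_div, div_mul_cancel₀ _ hden]
  linear_combination -ha - E ^ 2 * hb

lemma sq_div_sq_sub_one_eq_zero_iff {E a b : ℝ} (hE : E ^ 2 ≠ 1) (hb : b ≠ 0) :
    (E * b - a) ^ 2 / (E ^ 2 - 1) = 0 ↔ a / b = E := by
  rw [div_eq_zero_iff, or_iff_left (sub_ne_zero.mpr hE), pow_eq_zero_iff two_ne_zero,
    sub_eq_zero, div_eq_iff hb, eq_comm]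

theorem stmt_3 (lam μp : ℝ) (hlam : 0 < lam) (h1 : 0 < μp) (h2 : μp < 1) :
    (Real.exp (1/lam) / (Real.exp (2/lam) - 1)) *
      (Real.exp (1/lam) - 2 * Real.sqrt (μp * (1 - μp))) - μp
      = (Real.exp (1/lam) * Real.sqrt (1 - μp) - Real.sqrt μp)^2 / (Real.exp (2/lam) - 1)
    ∧
    ((Real.exp (1/lam) / (Real.exp (2/lam) - 1)) *
      (Real.exp (1/lam) - 2 * Real.sqrt (μp * (1 - μp))) - μp = 0
      ↔ Real.sqrt μp / Real.sqrt (1 - μp) = Real.exp (1/lam))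
    ∧
    0 ≤ (Real.exp (1/lam) / (Real.exp (2/lam) - 1)) *
      (Real.exp (1/lam) - 2 * Real.sqrt (μp * (1 - μp))) - μp := by
  have hexp : exp (2 / lam) = exp (1 / lam) ^ 2 := by rw [sq, ← exp_add]; ring_nf
  have hE : 1 < exp (1 / lam) ^ 2 := one_lt_pow₀ (one_lt_exp_iff.mpr (by positivity)) two_ne_zero
  have hb : √(1 - μp) ≠ 0 := (sqrt_pos.mpr (by linarith)).ne'
  rw [hexp, div_mul_sub_two_sqrt_sub_eq_sq_div hE.ne' h1.le h2.le,
    sq_div_sq_sub_one_eq_zero_iff hE.ne' hb]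
  exact ⟨rfl, Iff.rfl, div_nonneg (sq_nonneg _) (sub_pos.mpr hE).le⟩
end

section
/- Let λ > 0, μ ∈ (0,1), and define π_R = ((μ·e^{1/λ} − (1−μ))·e^{1/λ}) / ((e^{2/λ} − 1)·μ) and π_L = (((1−μ)·e^{1/λ} − μ)·e^{1/λ}) / ((e^{2/λ} − 1)·(1−μ)). Then π_R ∈ [0,1] if and only if e^{−1/λ} ≤ μ/(1−μ) ≤ e^{1/λ}, and the same equivalence holds for π_L. -/
theorem stmt_4 (lam μ : ℝ) (hlam : 0 < lam) (h1 : 0 < μ) (h2 : μ < 1)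
    (πR πL : ℝ)
    (hR : πR = ((μ * Real.exp (1/lam) - (1 - μ)) * Real.exp (1/lam)) /
      ((Real.exp (2/lam) - 1) * μ))
    (hL : πL = (((1 - μ) * Real.exp (1/lam) - μ) * Real.exp (1/lam)) /
      ((Real.exp (2/lam) - 1) * (1 - μ))) :
    (πR ∈ Set.Icc (0:ℝ) 1 ↔
      Real.exp (-(1/lam)) ≤ μ / (1 - μ) ∧ μ / (1 - μ) ≤ Real.exp (1/lam))
    ∧
    (πL ∈ Set.Icc (0:ℝ) 1 ↔
      Real.exp (-(1/lam)) ≤ μ / (1 - μ) ∧ μ / (1 - μ) ≤ Real.exp (1/lam)) := by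
  set E := Real.exp (1/lam) with hEdef
  have hE1 : 1 < E := by
    rw [hEdef, show (1:ℝ) = Real.exp 0 from (Real.exp_zero).symm]
    have : (0:ℝ) < 1/lam := by positivity
    simpa using Real.exp_lt_exp.mpr this
  have hE0 : (0:ℝ) < E := lt_trans one_pos hE1
  have hE2 : Real.exp (2/lam) = E * E := by
    rw [hEdef, ← Real.exp_add]; ring_nf
  have hEneg : Real.exp (-(1/lam)) = E⁻¹ := by rw [hEdef, ← Real.exp_neg]
  have hden : (0:ℝ) < E * E - 1 := by nlinarith
  have h1μ : (0:ℝ) < 1 - μ := by linarith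
  have key : Real.exp (-(1/lam)) ≤ μ/(1-μ) ↔ 1 - μ ≤ μ * E := by
    rw [hEneg, inv_eq_one_div, div_le_div_iff₀ hE0 h1μ]
    constructor <;> intro h <;> nlinarith
  have key2 : μ/(1-μ) ≤ E ↔ μ ≤ (1-μ) * E := by
    rw [div_le_iff₀ h1μ]
    constructor <;> intro h <;> nlinarith
  constructor
  · rw [hR, hE2, Set.mem_Icc, key, key2]
    constructor
    · rintro ⟨ha, hb⟩
      rw [le_div_iff₀ (by positivity)] at ha
      rw [div_le_one (by positivity)] at hb
      constructor <;> nlinarith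
    · rintro ⟨ha, hb⟩
      refine ⟨div_nonneg (by nlinarith) (by positivity), ?_⟩
      rw [div_le_one (by positivity)]
      nlinarith
  · rw [hL, hE2, Set.mem_Icc, key, key2]
    constructor
    · rintro ⟨ha, hb⟩
      rw [le_div_iff₀ (by positivity)] at ha
      rw [div_le_one (by positivity)] at hb
      constructor <;> nlinarith
    · rintro ⟨ha, hb⟩
      refine ⟨div_nonneg (by nlinarith) (by positivity), ?_⟩
      rw [div_le_one (by positivity)]
      nlinarith
end

section
/- Let δ > 0, let (μ_1,...,μ_N) be a probability vector with μ_1 ≥ ... ≥ μ_N > 0, and suppose K̄, K* ∈ {1,...,N} satisfy: Σ_{j=1}^{K̄} μ_j/μ_{K̄} < K̄ + δ ≤ Σ_{j=1}^{K̄} μ_j/μ_{K̄+1} (taking the right inequality vacuous if K̄ = N) and Σ_{j=1}^{K*} √μ_j/√μ_{K*} < K* + δ ≤ Σ_{j=1}^{K*} √μ_j/√μ_{K*+1} (likewise). Then K* ≥ K̄. -/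
theorem stmt_7 (N : ℕ) (hN : 1 ≤ N) (δ : ℝ) (hδ : 0 < δ)
    (μ : ℕ → ℝ)
    (hpos : ∀ j ∈ Finset.Icc 1 N, 0 < μ j)
    (hdec : ∀ i ∈ Finset.Icc 1 N, ∀ j ∈ Finset.Icc 1 N, i ≤ j → μ j ≤ μ i)
    (hsum : ∑ j ∈ Finset.Icc 1 N, μ j = 1)
    (Kbar Kstar : ℕ)
    (hKbar : Kbar ∈ Finset.Icc 1 N) (hKstar : Kstar ∈ Finset.Icc 1 N)
    (hbar1 : ∑ j ∈ Finset.Icc 1 Kbar, μ j / μ Kbar < Kbar + δ)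
    (hbar2 : Kbar < N → (Kbar : ℝ) + δ ≤ ∑ j ∈ Finset.Icc 1 Kbar, μ j / μ (Kbar + 1))
    (hstar1 : ∑ j ∈ Finset.Icc 1 Kstar, Real.sqrt (μ j) / Real.sqrt (μ Kstar)
      < Kstar + δ)
    (hstar2 : Kstar < N → (Kstar : ℝ) + δ ≤
      ∑ j ∈ Finset.Icc 1 Kstar, Real.sqrt (μ j) / Real.sqrt (μ (Kstar + 1))) :
    Kbar ≤ Kstar := by
  by_contra hcon
  push_neg at hcon
  obtain ⟨hK1, hKN⟩ := Finset.mem_Icc.mp hKbar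
  obtain ⟨hs1, hsN⟩ := Finset.mem_Icc.mp hKstar
  have hKstarN : Kstar < N := lt_of_lt_of_le hcon hKN
  have key : ∀ K, Kstar + 1 ≤ K → K ≤ N →
      (K : ℝ) + δ ≤ ∑ j ∈ Finset.Icc 1 K, μ j / μ K := by
    intro K hK
    induction K with
    | zero => omega
    | succ K ih =>
      intro hKN'
      have hμpos : 0 < μ (K+1) := hpos _ (Finset.mem_Icc.mpr ⟨by omega, hKN'⟩)
      have hsplit : ∑ j ∈ Finset.Icc 1 (K+1), μ j / μ (K+1)
          = (∑ j ∈ Finset.Icc 1 K, μ j / μ (K+1)) + 1 := by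
        rw [Finset.sum_Icc_succ_top (by omega : 1 ≤ K + 1)]
        rw [div_self hμpos.ne']
      have hmain : (K : ℝ) + δ ≤ ∑ j ∈ Finset.Icc 1 K, μ j / μ (K+1) := by
        rcases eq_or_lt_of_le hK with heq | hlt
        · have hKeq : K = Kstar := by omega
          subst hKeq
          refine le_trans (hstar2 hKstarN) ?_
          apply Finset.sum_le_sum
          intro j hj
          obtain ⟨hj1, hj2⟩ := Finset.mem_Icc.mp hj
          have hjmem : j ∈ Finset.Icc 1 N := Finset.mem_Icc.mpr ⟨hj1, by omega⟩
          have hμj : 0 < μ j := hpos _ hjmem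
          have hle : μ (K+1) ≤ μ j :=
            hdec j hjmem (K+1) (Finset.mem_Icc.mpr ⟨by omega, hKN'⟩) (by omega)
          rw [← Real.sqrt_div hμj.le]
          have h1 : (1:ℝ) ≤ μ j / μ (K+1) := (one_le_div hμpos).mpr hle
          have h2 := Real.sq_sqrt (by linarith : (0:ℝ) ≤ μ j / μ (K+1))
          have h3 : 1 ≤ Real.sqrt (μ j / μ (K+1)) := by
            rw [show (1:ℝ) = Real.sqrt 1 from Real.sqrt_one.symm]
            exact Real.sqrt_le_sqrt h1
          nlinarith
        · have hKmem : K ∈ Finset.Icc 1 N := Finset.mem_Icc.mpr ⟨by omega, by omega⟩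
          have hμK : 0 < μ K := hpos _ hKmem
          have hmono : μ (K+1) ≤ μ K :=
            hdec K hKmem (K+1) (Finset.mem_Icc.mpr ⟨by omega, hKN'⟩) (by omega)
          refine le_trans (ih (by omega) (by omega)) ?_
          apply Finset.sum_le_sum
          intro j hj
          obtain ⟨hj1, hj2⟩ := Finset.mem_Icc.mp hj
          have hμj : 0 < μ j := hpos _ (Finset.mem_Icc.mpr ⟨hj1, by omega⟩)
          exact div_le_div_of_nonneg_left hμj.le hμpos hmono
      rw [hsplit]
      push_cast
      linarith
  have := key Kbar (by omega) hKN
  linarith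
end

section
/- Fix λ > 0, N ≥ 1, a probability vector β ∈ Δ^{N−1}, and let C = {i : β_i > 0} with |C| = K. Then the linear system in (μ_1,...,μ_N): Σ_j μ_j = 1, and for each i ∈ C, Σ_{j=1}^N μ_j · e^{u_{ij}/λ} / (Σ_{k=1}^N β_k e^{u_{kj}/λ}) = 1, where u_{ii} = 1 and u_{ij} = 0 for i ≠ j, has a nonnegative solution μ ∈ ℝ^N_{≥0}. -/
theorem stmt_12 (lam : ℝ) (hlam : 0 < lam) (N : ℕ) (hN : 1 ≤ N)
    (β : Fin N → ℝ) (hnn : ∀ i, 0 ≤ β i) (hsum : ∑ i, β i = 1)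
    (u : Fin N → Fin N → ℝ) (hu : ∀ i j, u i j = if i = j then 1 else 0) :
    ∃ μ : Fin N → ℝ, (∀ j, 0 ≤ μ j) ∧ (∑ j, μ j = 1) ∧
      ∀ i, 0 < β i →
        ∑ j, μ j * Real.exp (u i j / lam) / (∑ k, β k * Real.exp (u k j / lam)) = 1 := by
  set a : ℝ := Real.exp (1 / lam) with ha
  have ha1 : 1 < a := by
    rw [ha]
    have : (0:ℝ) < 1 / lam := by positivity
    calc (1:ℝ) = Real.exp 0 := by simp
    _ < Real.exp (1/lam) := Real.exp_lt_exp.mpr this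
  set C : Finset (Fin N) := Finset.univ.filter (fun j => 0 < β j) with hC
  set K : ℕ := C.card with hK
  -- sum of β over C is 1
  have hβC : ∑ j ∈ C, β j = 1 := by
    rw [← hsum]
    refine Finset.sum_subset (Finset.subset_univ _) ?_
    intro x _ hx
    rw [hC] at hx
    simp only [Finset.mem_filter, Finset.mem_univ, true_and, not_lt] at hx
    linarith [hnn x]
  have hK1 : 1 ≤ K := by
    by_contra h
    push_neg at h
    interval_cases K
    have : C = ∅ := Finset.card_eq_zero.mp hK.symm
    rw [this] at hβC
    simp at hβC
  have hden : (0:ℝ) < (K : ℝ) + a - 1 := by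
    have : (1:ℝ) ≤ (K:ℝ) := by exact_mod_cast hK1
    linarith
  set c : ℝ := 1 / ((K:ℝ) + a - 1) with hc
  have hcpos : 0 < c := by positivity
  -- exp of utilities
  have hexp : ∀ i j : Fin N, Real.exp (u i j / lam) = if i = j then a else 1 := by
    intro i j
    rw [hu i j]
    by_cases h : i = j <;> simp [h, ha]
  -- denominators
  have hD : ∀ j : Fin N, (∑ k, β k * Real.exp (u k j / lam)) = 1 + β j * (a - 1) := by
    intro j
    have : ∀ k : Fin N, β k * Real.exp (u k j / lam)
        = β k + (if k = j then β k * (a - 1) else 0) := by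
      intro k
      rw [hexp k j]
      by_cases h : k = j <;> simp [h] <;> ring
    rw [Finset.sum_congr rfl (fun k _ => this k), Finset.sum_add_distrib, hsum,
      Finset.sum_ite_eq' Finset.univ j (fun k => β k * (a - 1))]
    simp
  refine ⟨fun j => if 0 < β j then (1 + β j * (a - 1)) * c else 0, ?_, ?_, ?_⟩
  · intro j
    by_cases h : 0 < β j
    · simp only [h, if_true]
      have : 0 ≤ 1 + β j * (a - 1) := by nlinarith [hnn j]
      positivity
    · simp [h]
  · rw [← Finset.sum_filter, ← hC]
    have h1 : ∀ j ∈ C, (1 + β j * (a - 1)) * c = c + β j * ((a - 1) * c) := by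
      intros; ring
    rw [Finset.sum_congr rfl h1, Finset.sum_add_distrib, Finset.sum_const,
      ← Finset.sum_mul, hβC, ← hK, nsmul_eq_mul, one_mul, hc]
    field_simp
    ring
  · intro i hi
    have hiC : i ∈ C := by rw [hC]; simp [hi]
    have hterm : ∀ j : Fin N,
        (if 0 < β j then (1 + β j * (a - 1)) * c else 0) * Real.exp (u i j / lam)
          / (∑ k, β k * Real.exp (u k j / lam))
        = if 0 < β j then c * (if i = j then a else 1) else 0 := by
      intro j
      rw [hD j, hexp i j]
      by_cases h : 0 < β j
      · simp only [h, if_true]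
        have hDj : (0:ℝ) < 1 + β j * (a - 1) := by nlinarith [hnn j]
        field_simp
      · simp [h]
    rw [Finset.sum_congr rfl (fun j _ => hterm j), ← Finset.sum_filter, ← hC]
    have : ∑ j ∈ C, c * (if i = j then a else 1)
        = c * (a - 1) + (K:ℝ) * c := by
      have h1 : ∀ j : Fin N, c * (if i = j then a else 1)
          = (if j = i then c * (a - 1) else 0) + c := by
        intro j
        by_cases h : i = j
        · simp [h, eq_comm]; ring
        · have h' : ¬ (j = i) := fun hji => h hji.symm
          simp [h, h']
      rw [Finset.sum_congr rfl (fun j _ => h1 j), Finset.sum_add_distrib,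
        Finset.sum_ite_eq' C i (fun _ => c * (a - 1)), if_pos hiC, Finset.sum_const, hK]
      ring
    rw [this, hc]
    field_simp
    ring
end

section
/- Fix λ > 0 and μ_p ∈ (0,1). Define τ*(μ) = λ·ln[ ((1−μ)/μ · e^{1/λ} + √((1−μ_p)/μ_p)) / ((1−μ)/μ + e^{1/λ}·√((1−μ_p)/μ_p)) ] for μ ∈ (0,1). Then τ* is strictly decreasing in μ, and τ*(μ) = 0 if and only if μ = √μ_p/(√μ_p + √(1−μ_p)); consequently τ*(μ) ≥ 0 if and only if μ ≤ √μ_p/(√μ_p + √(1−μ_p)). -/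
theorem stmt_16 (lam μp : ℝ) (hlam : 0 < lam) (hp1 : 0 < μp) (hp2 : μp < 1)
    (τ : ℝ → ℝ)
    (hτ : ∀ μ, τ μ = lam * Real.log
      (((1 - μ) / μ * Real.exp (1/lam) + Real.sqrt ((1 - μp) / μp)) /
        ((1 - μ) / μ + Real.exp (1/lam) * Real.sqrt ((1 - μp) / μp)))) :
    StrictAntiOn τ (Set.Ioo 0 1)
    ∧ (∀ μ ∈ Set.Ioo (0:ℝ) 1,
        (τ μ = 0 ↔ μ = Real.sqrt μp / (Real.sqrt μp + Real.sqrt (1 - μp))))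
    ∧ (∀ μ ∈ Set.Ioo (0:ℝ) 1,
        (0 ≤ τ μ ↔ μ ≤ Real.sqrt μp / (Real.sqrt μp + Real.sqrt (1 - μp)))) := by
  have hμp' : (0:ℝ) < 1 - μp := by linarith
  set s := Real.sqrt ((1 - μp) / μp) with hs_def
  have hs : 0 < s := Real.sqrt_pos.mpr (by positivity)
  set E := Real.exp (1/lam) with hE_def
  have hE : 1 < E := by
    calc (1:ℝ) = Real.exp 0 := Real.exp_zero.symm
    _ < Real.exp (1/lam) := Real.exp_lt_exp.mpr (by positivity)
  have hE0 : 0 < E := lt_trans one_pos hE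
  -- rewrite the threshold
  have hμ0 : Real.sqrt μp / (Real.sqrt μp + Real.sqrt (1 - μp)) = 1 / (1 + s) := by
    have hsp : 0 < Real.sqrt μp := Real.sqrt_pos.mpr hp1
    have h1p : 0 < Real.sqrt (1 - μp) := Real.sqrt_pos.mpr hμp'
    have hsv : s = Real.sqrt (1 - μp) / Real.sqrt μp := by
      rw [hs_def, Real.sqrt_div (le_of_lt hμp')]
    rw [hsv]
    field_simp
  have h1s : (0:ℝ) < 1 + s := by linarith
  -- basic facts for μ ∈ (0,1)
  have hr : ∀ μ ∈ Set.Ioo (0:ℝ) 1, 0 < (1 - μ)/μ := by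
    intro μ hμ
    have h1 : 0 < μ := hμ.1
    have h2 : 0 < 1 - μ := by linarith [hμ.2]
    positivity
  have hnum : ∀ μ ∈ Set.Ioo (0:ℝ) 1, 0 < (1 - μ)/μ * E + s := by
    intro μ hμ; have := hr μ hμ; positivity
  have hden : ∀ μ ∈ Set.Ioo (0:ℝ) 1, 0 < (1 - μ)/μ + E * s := by
    intro μ hμ; have := hr μ hμ; positivity
  -- r ≥ s ↔ μ ≤ 1/(1+s), r = s ↔ μ = 1/(1+s)
  have hrs_le : ∀ μ ∈ Set.Ioo (0:ℝ) 1, (s ≤ (1 - μ)/μ ↔ μ ≤ 1/(1+s)) := by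
    intro μ hμ
    rw [le_div_iff₀ hμ.1, le_div_iff₀ h1s]
    constructor <;> intro h <;> nlinarith
  have hrs_eq : ∀ μ ∈ Set.Ioo (0:ℝ) 1, (s = (1 - μ)/μ ↔ μ = 1/(1+s)) := by
    intro μ hμ
    rw [eq_div_iff (ne_of_gt hμ.1), eq_div_iff (ne_of_gt h1s)]
    constructor <;> intro h <;> nlinarith
  refine ⟨?_, ?_, ?_⟩
  · -- strict anti
    intro μ1 hμ1 μ2 hμ2 hlt
    rw [hτ μ1, hτ μ2]
    have hr1 := hr μ1 hμ1
    have hr2 := hr μ2 hμ2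
    have hrlt : (1 - μ2)/μ2 < (1 - μ1)/μ1 := by
      rw [div_lt_div_iff₀ hμ2.1 hμ1.1]
      nlinarith [hμ1.1, hμ2.1]
    have harg : ((1 - μ2)/μ2 * E + s) / ((1 - μ2)/μ2 + E * s)
        < ((1 - μ1)/μ1 * E + s) / ((1 - μ1)/μ1 + E * s) := by
      rw [div_lt_div_iff₀ (hden μ2 hμ2) (hden μ1 hμ1)]
      nlinarith [mul_pos hs (mul_pos (sub_pos.mpr hrlt) (by nlinarith : (0:ℝ) < E^2 - 1))]
    have hpos2 : 0 < ((1 - μ2)/μ2 * E + s) / ((1 - μ2)/μ2 + E * s) :=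
      div_pos (hnum μ2 hμ2) (hden μ2 hμ2)
    exact mul_lt_mul_of_pos_left (Real.log_lt_log hpos2 harg) hlam
  · -- τ μ = 0 ↔ μ = μ0
    intro μ hμ
    rw [hτ μ, hμ0, mul_eq_zero]
    have hargpos : 0 < ((1 - μ)/μ * E + s) / ((1 - μ)/μ + E * s) :=
      div_pos (hnum μ hμ) (hden μ hμ)
    have : (Real.log (((1 - μ)/μ * E + s) / ((1 - μ)/μ + E * s)) = 0)
        ↔ ((1 - μ)/μ * E + s) / ((1 - μ)/μ + E * s) = 1 := by
      constructor
      · intro h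
        have := Real.exp_log hargpos
        rw [h, Real.exp_zero] at this
        linarith
      · intro h; rw [h, Real.log_one]
    rw [this, div_eq_one_iff_eq (ne_of_gt (hden μ hμ))]
    have : ((1 - μ)/μ * E + s = (1 - μ)/μ + E * s) ↔ s = (1 - μ)/μ := by
      constructor <;> intro h <;> nlinarith
    rw [this, hrs_eq μ hμ]
    constructor
    · rintro (h | h)
      · exact absurd h (ne_of_gt hlam)
      · exact h
    · intro h; exact Or.inr h
  · -- 0 ≤ τ μ ↔ μ ≤ μ0
    intro μ hμ
    rw [hτ μ, hμ0]
    have hargpos : 0 < ((1 - μ)/μ * E + s) / ((1 - μ)/μ + E * s) :=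
      div_pos (hnum μ hμ) (hden μ hμ)
    rw [mul_nonneg_iff_of_pos_left hlam, Real.log_nonneg_iff hargpos,
      one_le_div (hden μ hμ)]
    have : ((1 - μ)/μ + E * s ≤ (1 - μ)/μ * E + s) ↔ s ≤ (1 - μ)/μ := by
      constructor <;> intro h <;> nlinarith
    rw [this, hrs_le μ hμ]
end

section
/- Fix a probability vector (q_1,...,q_N) with q_1 ≥ ... ≥ q_N > 0 and λ > 0; let δ = e^{1/λ}−1. Let β be supported on {1,...,K} with β_i = (1/δ)·((K+δ)√(p_i)/Σ_{j≤K}√p_j − 1) > 0 for i ≤ K, where p = μ_p is the principal's prior. If the agent's prior is μ(ω_i) = √p_i/Σ_j √p_j and the agent reports truthfully, then the principal's Bayesian posterior after recommendation a_K satisfies μ_p(ω_K | a_K) ≥ μ_p(ω_j | a_K) for all j whenever e^{1/λ}·√p_K ≥ √p_1, and this last inequality is implied by δ·√p_K ≥ Σ_{i=1}^{K−1}(√p_i − √p_K). -/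
/-!
With state-matching utility the logit denominator in state `ω_j` is `∑ β + δ β_j`, and the
chosen weights make it `(K + δ) √p_j / ∑_{i ≤ K} √p_i` on the support and `1` off it. So the
principal's joint probability `p_j π(a_K | ω_j)` is proportional to `e^{[j = K]/λ} √p_j` for
`j ≤ K`, which is largest at `j = K` once `√p_1 ≤ e^{1/λ} √p_K`; for `j > K` it is
`β_K p_j ≤ β_K p_K`, dominated because `(K + δ) √p_K ≤ (1 + δ) ∑_{i ≤ K} √p_i`. Posteriors are
these joint probabilities over a common normaliser. The sufficient condition holds since a sum
of the nonnegative terms `√p_i - √p_K` dominates its first term.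
-/

open Finset

lemma sum_mul_exp_ite_div_of_subset {ι : Type*} [DecidableEq ι] {s t : Finset ι} (hst : s ⊆ t)
    {β : ι → ℝ} (hβ : ∀ i ∈ t, i ∉ s → β i = 0) (lam : ℝ) (j : ι) :
    ∑ k ∈ t, β k * Real.exp ((if k = j then 1 else 0) / lam)
      = ∑ k ∈ s, β k + (Real.exp (1 / lam) - 1) * if j ∈ s then β j else 0 := by
  have hterm : ∀ k, β k * Real.exp ((if k = j then 1 else 0) / lam)
      = β k + if k = j then (Real.exp (1 / lam) - 1) * β k else 0 := by
    intro k
    split_ifs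
    · ring
    · rw [zero_div, Real.exp_zero, mul_one, add_zero]
  rw [← sum_subset hst fun k hkt hks => by rw [hβ k hkt hks, zero_mul]]
  simp only [hterm, sum_add_distrib, sum_ite_eq', mul_ite, mul_zero]

lemma sum_eq_one_of_eq_inv_mul_sub {ι : Type*} {s : Finset ι} {w β : ι → ℝ} {δ : ℝ} (hδ : δ ≠ 0)
    (hw : ∑ i ∈ s, w i ≠ 0)
    (hβ : ∀ i ∈ s, β i = 1 / δ * ((#s + δ) * w i / ∑ j ∈ s, w j - 1)) :
    ∑ i ∈ s, β i = 1 := by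
  rw [sum_congr rfl hβ, ← mul_sum, sum_sub_distrib, ← sum_div, ← mul_sum, sum_const,
    nsmul_one]
  field_simp
  ring

lemma sum_mul_exp_ite_div_eq_of_eq_inv_mul_sub {ι : Type*} [DecidableEq ι] {s t : Finset ι}
    (hst : s ⊆ t) {lam δ : ℝ} (hδ : δ = Real.exp (1 / lam) - 1) (hδ0 : δ ≠ 0) {w β : ι → ℝ}
    (hw : ∑ i ∈ s, w i ≠ 0)
    (hβin : ∀ i ∈ s, β i = 1 / δ * ((#s + δ) * w i / ∑ j ∈ s, w j - 1))
    (hβout : ∀ i ∈ t, i ∉ s → β i = 0) (j : ι) :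
    ∑ k ∈ t, β k * Real.exp ((if k = j then 1 else 0) / lam)
      = if j ∈ s then (#s + δ) / (∑ i ∈ s, w i) * w j else 1 := by
  rw [sum_mul_exp_ite_div_of_subset hst hβout, sum_eq_one_of_eq_inv_mul_sub hδ0 hw hβin, ← hδ]
  split_ifs with hj
  · rw [hβin j hj]
    field_simp
    ring
  · ring

lemma div_div_mul_sqrt_mul_self {a c T x : ℝ} (hx : 0 < x) :
    a / (c / T * √x) * x = T / c * (a * √x) := by
  have hsqrt : √x ≠ 0 := (Real.sqrt_pos.mpr hx).ne'
  conv_rhs => rw [← Real.div_sqrt (x := x)]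
  field_simp

lemma div_sum_mul_exp_ite_div_mul_eq {ι : Type*} [DecidableEq ι] {s t : Finset ι} (hst : s ⊆ t)
    {lam δ : ℝ} (hδ : δ = Real.exp (1 / lam) - 1) (hδ0 : δ ≠ 0) {p β : ι → ℝ}
    (hp : ∀ i ∈ s, 0 < p i) (hw : ∑ i ∈ s, √(p i) ≠ 0)
    (hβin : ∀ i ∈ s, β i = 1 / δ * ((#s + δ) * √(p i) / ∑ j ∈ s, √(p j) - 1))
    (hβout : ∀ i ∈ t, i ∉ s → β i = 0) (k i : ι) :
    β k * Real.exp ((if k = i then 1 else 0) / lam)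
        / (∑ j ∈ t, β j * Real.exp ((if j = i then 1 else 0) / lam)) * p i
      = if i ∈ s then (∑ j ∈ s, √(p j)) / (#s + δ)
          * (β k * Real.exp ((if k = i then 1 else 0) / lam) * √(p i))
        else β k * Real.exp ((if k = i then 1 else 0) / lam) * p i := by
  rw [sum_mul_exp_ite_div_eq_of_eq_inv_mul_sub hst hδ hδ0 hw hβin hβout]
  by_cases hi : i ∈ s
  · rw [if_pos hi, if_pos hi]
    exact div_div_mul_sqrt_mul_self (hp i hi)
  · rw [if_neg hi, if_neg hi, div_one]

lemma exp_ite_div_mul_le {ι : Type*} [DecidableEq ι] {k j : ι} {lam : ℝ} {a : ι → ℝ}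
    (h : a j ≤ Real.exp (1 / lam) * a k) :
    Real.exp ((if k = j then 1 else 0) / lam) * a j ≤ Real.exp (1 / lam) * a k := by
  split_ifs with hkj
  · rw [hkj]
  · simpa using h

lemma le_one_add_mul_of_sum_sub_le {a : ℕ → ℝ} {K : ℕ} {δ : ℝ} (hK : 1 ≤ K)
    (ha : ∀ i ∈ Icc 1 (K - 1), a K ≤ a i) (h : ∑ i ∈ Icc 1 (K - 1), (a i - a K) ≤ δ * a K) :
    a 1 ≤ (1 + δ) * a K := by
  suffices a 1 - a K ≤ ∑ i ∈ Icc 1 (K - 1), (a i - a K) by linarith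
  obtain rfl | hK2 := hK.eq_or_lt
  · simp
  · exact single_le_sum (fun i hi => sub_nonneg.mpr (ha i hi)) (mem_Icc.mpr ⟨le_rfl, by omega⟩)

lemma le_div_add_mul_one_add_mul_sqrt {n δ T x y : ℝ} (hn : 1 ≤ n) (hδ : 0 ≤ δ) (hx : 0 ≤ x)
    (hy : y ≤ x) (hT : n * √x ≤ T) : y ≤ T / (n + δ) * ((1 + δ) * √x) := by
  have hsqrt := Real.sqrt_nonneg x
  have hscale : (n + δ) * √x ≤ (1 + δ) * T := by
    nlinarith [mul_nonneg hδ hsqrt, mul_nonneg (mul_nonneg hδ hsqrt) (sub_nonneg.mpr hn)]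
  calc y ≤ √x * √x := by rwa [Real.mul_self_sqrt hx]
    _ ≤ √x * ((1 + δ) * T / (n + δ)) := by
        gcongr
        rwa [le_div_iff₀ (by positivity), mul_comm]
    _ = T / (n + δ) * ((1 + δ) * √x) := by ring

theorem stmt_18_general (N : ℕ) (lam : ℝ) (hlam : 0 < lam)
    (δ : ℝ) (hδ : δ = Real.exp (1/lam) - 1)
    (p : ℕ → ℝ)
    (hpos : ∀ i ∈ Finset.Icc 1 N, 0 < p i)
    (hdec : ∀ i ∈ Finset.Icc 1 N, ∀ j ∈ Finset.Icc 1 N, i ≤ j → p j ≤ p i)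
    (K : ℕ) (hK : K ∈ Finset.Icc 1 N)
    (β : ℕ → ℝ)
    (hβin : ∀ i ∈ Finset.Icc 1 K,
      β i = (1/δ) * (((K : ℝ) + δ) * Real.sqrt (p i) /
        (∑ j ∈ Finset.Icc 1 K, Real.sqrt (p j)) - 1))
    (hβout : ∀ i, i ∉ Finset.Icc 1 K → β i = 0)
    (hβpos : ∀ i ∈ Finset.Icc 1 K, 0 < β i)
    (u : ℕ → ℕ → ℝ) (hu : ∀ i j, u i j = if i = j then 1 else 0)
    -- π j : probability that the truthful agent recommends a_K in state ω_j
    (π : ℕ → ℝ)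
    (hπ : ∀ j, π j = β K * Real.exp (u K j / lam) /
      ∑ k ∈ Finset.Icc 1 N, β k * Real.exp (u k j / lam))
    -- post j : the principal's Bayesian posterior on state ω_j after recommendation a_K
    (post : ℕ → ℝ)
    (hpost : ∀ j, post j = π j * p j / ∑ i ∈ Finset.Icc 1 N, p i * π i) :
    (δ * Real.sqrt (p K) ≥ ∑ i ∈ Finset.Icc 1 (K - 1), (Real.sqrt (p i) - Real.sqrt (p K))
      → Real.exp (1/lam) * Real.sqrt (p K) ≥ Real.sqrt (p 1))
    ∧ (Real.exp (1/lam) * Real.sqrt (p K) ≥ Real.sqrt (p 1)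
      → ∀ j ∈ Finset.Icc 1 N, post j ≤ post K) := by
  obtain ⟨hK1, hKN⟩ := mem_Icc.mp hK
  have hsub : Icc 1 K ⊆ Icc 1 N := Icc_subset_Icc_right hKN
  have hKK : K ∈ Icc 1 K := right_mem_Icc.mpr hK1
  have hE : Real.exp (1 / lam) = 1 + δ := by rw [hδ]; ring
  have hδpos : 0 < δ := hδ ▸ sub_pos.mpr (Real.one_lt_exp_iff.mpr (by positivity))
  have hsqrt_anti : ∀ i ∈ Icc 1 N, ∀ j ∈ Icc 1 N, i ≤ j → √(p j) ≤ √(p i) :=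
    fun i hi j hj hij => Real.sqrt_le_sqrt (hdec i hi j hj hij)
  refine ⟨fun h => ?_, fun h j hj => ?_⟩
  · rw [hE]
    exact le_one_add_mul_of_sum_sub_le hK1 (fun i hi => hsqrt_anti i (by grind) K hK (by grind)) h
  set T := ∑ i ∈ Icc 1 K, √(p i)
  have hT : 0 < T := sum_pos (fun i hi => Real.sqrt_pos.mpr (hpos i (hsub hi))) ⟨K, hKK⟩
  have hjoint : ∀ i, π i * p i = if i ∈ Icc 1 K
      then T / (K + δ) * (β K * Real.exp (u K i / lam) * √(p i))
      else β K * Real.exp (u K i / lam) * p i := fun i => by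
    simpa [hπ, hu] using div_sum_mul_exp_ite_div_mul_eq hsub hδ hδpos.ne'
      (fun i hi => hpos i (hsub hi)) hT.ne' (by simpa using hβin) (fun k _ hk => hβout k hk) K i
  have hβK := hβpos K hKK
  rw [hpost j, hpost K]
  refine div_le_div_of_nonneg_right ?_ (sum_nonneg fun i hi => ?_)
  · rw [hjoint j, hjoint K, if_pos hKK, hu K K, if_pos rfl]
    by_cases hjK : j ∈ Icc 1 K
    · rw [if_pos hjK, mul_assoc (β K), mul_assoc (β K), hu]
      refine mul_le_mul_of_nonneg_left (mul_le_mul_of_nonneg_left ?_ hβK.le) (by positivity)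
      exact exp_ite_div_mul_le (a := fun i => √(p i))
        ((hsqrt_anti 1 (hsub (left_mem_Icc.mpr hK1)) j hj (mem_Icc.mp hj).1).trans h)
    · have hTK : K * √(p K) ≤ T := by
        simpa using card_nsmul_le_sum (Icc 1 K) (fun i => √(p i)) (√(p K))
          fun i hi => hsqrt_anti i (hsub hi) K hK (mem_Icc.mp hi).2
      rw [if_neg hjK, hu, if_neg (ne_of_mem_of_not_mem hKK hjK), zero_div, Real.exp_zero,
        mul_one, hE]
      refine le_of_le_of_eq (mul_le_mul_of_nonneg_left (le_div_add_mul_one_add_mul_sqrt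
        (by exact_mod_cast hK1) hδpos.le (hpos K hK).le (hdec K hK j hj (by grind)) hTK) hβK.le)
        (by ring)
  · have := hpos i hi
    rw [mul_comm, hjoint i]
    split_ifs <;> positivity

theorem stmt_18 (N : ℕ) (hN : 1 ≤ N) (lam : ℝ) (hlam : 0 < lam)
    (δ : ℝ) (hδ : δ = Real.exp (1/lam) - 1)
    (p : ℕ → ℝ)
    (hpos : ∀ i ∈ Finset.Icc 1 N, 0 < p i)
    (hdec : ∀ i ∈ Finset.Icc 1 N, ∀ j ∈ Finset.Icc 1 N, i ≤ j → p j ≤ p i)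
    (hsum : ∑ i ∈ Finset.Icc 1 N, p i = 1)
    (K : ℕ) (hK : K ∈ Finset.Icc 1 N)
    (β : ℕ → ℝ)
    (hβin : ∀ i ∈ Finset.Icc 1 K,
      β i = (1/δ) * (((K : ℝ) + δ) * Real.sqrt (p i) /
        (∑ j ∈ Finset.Icc 1 K, Real.sqrt (p j)) - 1))
    (hβout : ∀ i, i ∉ Finset.Icc 1 K → β i = 0)
    (hβpos : ∀ i ∈ Finset.Icc 1 K, 0 < β i)
    (μ : ℕ → ℝ)
    (hμ : ∀ i ∈ Finset.Icc 1 N,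
      μ i = Real.sqrt (p i) / ∑ j ∈ Finset.Icc 1 N, Real.sqrt (p j))
    (u : ℕ → ℕ → ℝ) (hu : ∀ i j, u i j = if i = j then 1 else 0)
    -- π j : probability that the truthful agent recommends a_K in state ω_j
    (π : ℕ → ℝ)
    (hπ : ∀ j, π j = β K * Real.exp (u K j / lam) /
      ∑ k ∈ Finset.Icc 1 N, β k * Real.exp (u k j / lam))
    -- post j : the principal's Bayesian posterior on state ω_j after recommendation a_K
    (post : ℕ → ℝ)
    (hpost : ∀ j, post j = π j * p j / ∑ i ∈ Finset.Icc 1 N, p i * π i) :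
    (δ * Real.sqrt (p K) ≥ ∑ i ∈ Finset.Icc 1 (K - 1), (Real.sqrt (p i) - Real.sqrt (p K))
      → Real.exp (1/lam) * Real.sqrt (p K) ≥ Real.sqrt (p 1))
    ∧ (Real.exp (1/lam) * Real.sqrt (p K) ≥ Real.sqrt (p 1)
      → ∀ j ∈ Finset.Icc 1 N, post j ≤ post K) :=
  stmt_18_general N lam hlam δ hδ p hpos hdec K hK β hβin hβout hβpos u hu π hπ post hpost
end
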